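/- Let A be a nonempty finite type of cardinality d, let p, q : A → ℝ be probability distributions (nonnegative, summing to 1), and let ρ and σ be the diagonal complex matrices with diagonal entries p i and q i respectively (so ρ and σ commute). For each i set r i = 1 if p i = 0 and r i = min(1, q i / p i) otherwise. Then, for the cost matrix K̃₀ = 1 − (1/d) • S: 𝒦_{K̃₀}(ρ, σ) = (1/d) · ( d − Σ_{i,j} p i · √(r i) · √(r j) ). -/

import Mathlib

open Matrix
open scoped Kronecker ComplexOrder

noncomputable def jordan {n : Type*} [Fintype n] (X Y : Matrix n n ℂ) : Matrix n n ℂ :=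
  (2 : ℂ)⁻¹ • (X * Y + Y * X)

noncomputable def trB {A B : Type*} [Fintype B] (M : Matrix (A × B) (A × B) ℂ) : Matrix A A ℂ :=
  Matrix.of fun i j => ∑ k, M (i, k) (j, k)

noncomputable def trA {A B : Type*} [Fintype A] (M : Matrix (A × B) (A × B) ℂ) : Matrix B B ℂ :=
  Matrix.of fun k l => ∑ i, M (i, k) (i, l)

def ptA {A B : Type*} (M : Matrix (A × B) (A × B) ℂ) : Matrix (A × B) (A × B) ℂ :=
  Matrix.of fun p q => M (q.1, p.2) (p.1, q.2)

def swap (A : Type*) [DecidableEq A] : Matrix (A × A) (A × A) ℂ :=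
  Matrix.of fun p q => if p.1 = q.2 ∧ p.2 = q.1 then 1 else 0

def IsState {A : Type*} [Fintype A] (ρ : Matrix A A ℂ) : Prop :=
  ρ.PosSemidef ∧ ρ.trace = 1

def IsJam {A B : Type*} [Fintype A] [Fintype B] [DecidableEq A]
    (J : Matrix (A × B) (A × B) ℂ) : Prop :=
  (ptA J).PosSemidef ∧ trB J = 1

noncomputable def cost {A B : Type*} [Fintype A] [Fintype B] [DecidableEq A] [DecidableEq B]
    (K : Matrix (A × B) (A × B) ℂ) (ρ : Matrix A A ℂ) (σ : Matrix B B ℂ) : ℝ :=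
  sInf { r : ℝ | ∃ J : Matrix (A × B) (A × B) ℂ, IsJam J ∧
      trA ((ρ ⊗ₖ (1 : Matrix B B ℂ)) * J) = σ ∧
      r = (Matrix.trace (K * jordan (ρ ⊗ₖ (1 : Matrix B B ℂ)) J)).re }

/-!
For diagonal `ρ` the objective of a Jamiołkowski matrix `J` is
`1 - (1/d) Σ_{i,k} p i Re J_{(k,i),(i,k)}`, and `J_{(k,i),(i,k)}` is the entry of the positive
semidefinite matrix `T_A(J)` at `((i,i),(k,k))`. By Cauchy–Schwarz it is at most
`√(J_{(i,i),(i,i)} J_{(k,k),(k,k)})`, and the two marginal constraints give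
`J_{(i,i),(i,i)} ≤ 1` and `p i J_{(i,i),(i,i)} ≤ q i`, i.e. `J_{(i,i),(i,i)} ≤ r i`.
Equality is attained by the `J` whose partial transpose is `|v⟩⟨v| + diag D`, where
`v = Σ_i √(r i) |i i⟩` and `D` moves the mass `p i (1 - r i) = (p i - q i)⁺` left over by the
coherent part onto the deficits `(q k - p k)⁺`.
-/

theorem Matrix.PosSemidef.norm_apply_sq_le {𝕜 n : Type*} [RCLike 𝕜] [Fintype n]
    {M : Matrix n n 𝕜} (hM : M.PosSemidef) (x y : n) :
    ‖M x y‖ ^ 2 ≤ RCLike.re (M x x) * RCLike.re (M y y) := by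
  have hdet := (hM.submatrix ![x, y]).det_nonneg
  rw [det_fin_two] at hdet
  simp only [submatrix_apply, Matrix.cons_val_zero, Matrix.cons_val_one] at hdet
  rw [← hM.isHermitian.apply x y, ← hM.isHermitian.coe_re_apply_self x,
    ← hM.isHermitian.coe_re_apply_self y] at hdet
  simp only [RCLike.star_def, RCLike.conj_mul] at hdet
  rw [← hM.isHermitian.apply x y, norm_star]
  exact_mod_cast sub_nonneg.mp hdet

theorem Matrix.PosSemidef.re_apply_le {𝕜 n : Type*} [RCLike 𝕜] [Fintype n]
    {M : Matrix n n 𝕜} (hM : M.PosSemidef) (x y : n) :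
    RCLike.re (M x y) ≤ √(RCLike.re (M x x)) * √(RCLike.re (M y y)) := by
  rw [← Real.sqrt_mul (RCLike.nonneg_iff.mp hM.diag_nonneg).1]
  calc RCLike.re (M x y) ≤ |‖M x y‖| := (RCLike.re_le_norm _).trans (le_abs_self _)
    _ ≤ _ := Real.abs_le_sqrt (hM.norm_apply_sq_le x y)

theorem diagonal_kronecker_one {α A B : Type*} [MulZeroOneClass α] [DecidableEq A]
    [DecidableEq B] (a : A → α) :
    diagonal a ⊗ₖ (1 : Matrix B B α) = diagonal fun x : A × B => a x.1 := by
  rw [← diagonal_one, diagonal_kronecker_diagonal]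
  simp only [mul_one]

theorem trace_trA {A B : Type*} [Fintype A] [Fintype B] (M : Matrix (A × B) (A × B) ℂ) :
    (trA M).trace = M.trace := by
  simp only [trA, trace, diag, of_apply, Fintype.sum_prod_type]
  exact Finset.sum_comm

theorem trace_jordan {n : Type*} [Fintype n] (X Y : Matrix n n ℂ) :
    (jordan X Y).trace = (X * Y).trace := by
  rw [jordan, trace_smul, trace_add, trace_mul_comm Y X, smul_eq_mul]
  ring

theorem re_apply_swap_comm {A : Type*} {J : Matrix (A × A) (A × A) ℂ}
    (hJ : (ptA J).IsHermitian) (i k : A) :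
    (J (k, i) (i, k)).re = (J (i, k) (k, i)).re := by
  have h := hJ.apply (i, i) (k, k)
  simp only [ptA, of_apply] at h
  rw [← h, Complex.star_def, Complex.conj_re]

section swap

variable {A : Type*} [Fintype A] [DecidableEq A]

theorem trace_swap_mul (N : Matrix (A × A) (A × A) ℂ) :
    (swap A * N).trace = ∑ i, ∑ k, N (k, i) (i, k) := by
  simp [trace, mul_apply, _root_.swap, Fintype.sum_prod_type, ite_and]

theorem re_trace_swap_mul_jordan (p : A → ℝ) {J : Matrix (A × A) (A × A) ℂ}
    (hJ : (ptA J).IsHermitian) :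
    (trace (swap A * jordan (diagonal fun x : A × A => (p x.1 : ℂ)) J)).re =
      ∑ i, ∑ k, p i * (J (k, i) (i, k)).re := by
  have hleft :
      ∑ i, ∑ k, p k * (J (k, i) (i, k)).re = ∑ i, ∑ k, p i * (J (k, i) (i, k)).re := by
    rw [Finset.sum_comm]
    simp_rw [re_apply_swap_comm hJ]
  have hhalf : (2⁻¹ : ℂ) = ((2⁻¹ : ℝ) : ℂ) := by push_cast; rfl
  rw [jordan, Matrix.mul_smul, trace_smul, mul_add, trace_add, trace_swap_mul, trace_swap_mul,
    hhalf, smul_eq_mul, Complex.re_ofReal_mul, Complex.add_re]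
  simp only [diagonal_mul, mul_diagonal, Complex.re_sum, Complex.re_ofReal_mul,
    Complex.re_mul_ofReal]
  simp_rw [hleft, mul_comm _ (p _)]
  ring

theorem re_trace_mul_jordan (c : ℝ) (p : A → ℝ) {J : Matrix (A × A) (A × A) ℂ}
    {σ : Matrix A A ℂ} (hJ : (ptA J).IsHermitian)
    (hσ : trA (diagonal (fun x : A × A => (p x.1 : ℂ)) * J) = σ) (hσ1 : σ.trace = 1) :
    (trace ((1 - (c : ℂ) • swap A) * jordan (diagonal fun x : A × A => (p x.1 : ℂ)) J)).re =
      1 - c * ∑ i, ∑ k, p i * (J (k, i) (i, k)).re := by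
  rw [sub_mul, one_mul, smul_mul_assoc, trace_sub, trace_smul, trace_jordan, ← trace_trA, hσ,
    hσ1, Complex.sub_re, smul_eq_mul, Complex.re_ofReal_mul, re_trace_swap_mul_jordan p hJ,
    Complex.one_re]

end swap

noncomputable def acceptRatio (a b : ℝ) : ℝ := if a = 0 then 1 else min 1 (b / a)

section acceptRatio

variable {a b : ℝ}

theorem acceptRatio_le_one (a b : ℝ) : acceptRatio a b ≤ 1 := by
  unfold acceptRatio; split_ifs
  exacts [le_rfl, min_le_left _ _]

theorem acceptRatio_nonneg (ha : 0 ≤ a) (hb : 0 ≤ b) : 0 ≤ acceptRatio a b := by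
  unfold acceptRatio; split_ifs
  exacts [zero_le_one, le_min zero_le_one (div_nonneg hb ha)]

theorem acceptRatio_eq_one (ha : 0 ≤ a) (hab : a ≤ b) : acceptRatio a b = 1 := by
  unfold acceptRatio; split_ifs with h
  · rfl
  · exact min_eq_left ((one_le_div (lt_of_le_of_ne ha (Ne.symm h))).mpr hab)

theorem le_acceptRatio {x : ℝ} (ha : 0 ≤ a) (hx : x ≤ 1) (hxb : a * x ≤ b) :
    x ≤ acceptRatio a b := by
  unfold acceptRatio; split_ifs with h
  · exact hx
  · exact le_min hx ((le_div_iff₀' (lt_of_le_of_ne ha (Ne.symm h))).mpr hxb)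

theorem mul_acceptRatio (ha : 0 ≤ a) (hb : 0 ≤ b) : a * acceptRatio a b = min a b := by
  unfold acceptRatio; split_ifs with h
  · simp [h, hb]
  · rw [mul_min_of_nonneg _ _ ha, mul_one, mul_div_cancel₀ _ h]

theorem mul_one_sub_acceptRatio (ha : 0 ≤ a) (hb : 0 ≤ b) :
    a * (1 - acceptRatio a b) = (a - b)⁺ := by
  rw [mul_one_sub, mul_acceptRatio ha hb, posPart_def]
  rcases le_total a b with h | h <;> simp [h]

theorem one_sub_acceptRatio_mul_posPart (ha : 0 ≤ a) :
    (1 - acceptRatio a b) * (b - a)⁺ = 0 := by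
  rcases le_total a b with h | h
  · simp [acceptRatio_eq_one ha h]
  · simp [posPart_eq_zero.mpr (sub_nonpos.mpr h)]

end acceptRatio

section residualPlan

variable {A : Type*} [Fintype A] {p q : A → ℝ}

-- When `p = q` the denominator vanishes and the plan is `0`, as it must be since then `r = 1`.
noncomputable def residualPlan (p q : A → ℝ) (i k : A) : ℝ :=
  (1 - acceptRatio (p i) (q i)) * (q k - p k)⁺ / ∑ j, (q j - p j)⁺

theorem sum_posPart_sub_comm (hpq : ∑ i, p i = ∑ i, q i) :
    ∑ i, (q i - p i)⁺ = ∑ i, (p i - q i)⁺ := by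
  have hdiff : ∀ i, (q i - p i)⁺ - (p i - q i)⁺ = q i - p i := fun i => by
    rw [← neg_sub (q i) (p i), posPart_neg, posPart_sub_negPart]
  rw [← sub_eq_zero, ← Finset.sum_sub_distrib, Finset.sum_congr rfl fun i _ => hdiff i,
    Finset.sum_sub_distrib, hpq, sub_self]

theorem residualPlan_nonneg (i k : A) : 0 ≤ residualPlan p q i k :=
  div_nonneg (mul_nonneg (sub_nonneg.mpr (acceptRatio_le_one _ _)) (posPart_nonneg _))
    (Finset.sum_nonneg fun _ _ => posPart_nonneg _)

theorem residualPlan_self (hp : ∀ i, 0 ≤ p i) (i : A) : residualPlan p q i i = 0 := by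
  rw [residualPlan, one_sub_acceptRatio_mul_posPart (hp i), zero_div]

theorem sum_residualPlan (hp : ∀ i, 0 ≤ p i) (hpq : ∑ i, p i = ∑ i, q i) (i : A) :
    ∑ k, residualPlan p q i k = 1 - acceptRatio (p i) (q i) := by
  by_cases hT : ∑ j, (q j - p j)⁺ = 0
  · have hpi : (p i - q i)⁺ = 0 := by
      rw [sum_posPart_sub_comm hpq,
        Finset.sum_eq_zero_iff_of_nonneg fun _ _ => posPart_nonneg _] at hT
      exact hT i (Finset.mem_univ i)
    rw [acceptRatio_eq_one (hp i) (sub_nonpos.mp (posPart_eq_zero.mp hpi))]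
    simp [residualPlan, hT]
  · simp_rw [residualPlan, ← Finset.sum_div, ← Finset.mul_sum, mul_div_cancel_right₀ _ hT]

theorem sum_mul_residualPlan (hp : ∀ i, 0 ≤ p i) (hq : ∀ i, 0 ≤ q i)
    (hpq : ∑ i, p i = ∑ i, q i) (k : A) :
    ∑ i, p i * residualPlan p q i k = (q k - p k)⁺ := by
  have hterm : ∀ i, p i * residualPlan p q i k
      = (p i - q i)⁺ * (q k - p k)⁺ / ∑ j, (q j - p j)⁺ := fun i => by
    rw [← mul_one_sub_acceptRatio (hp i) (hq i), residualPlan]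
    ring
  by_cases hT : ∑ j, (q j - p j)⁺ = 0
  · have hk : (q k - p k)⁺ = 0 := by
      rw [Finset.sum_eq_zero_iff_of_nonneg fun _ _ => posPart_nonneg _] at hT
      exact hT k (Finset.mem_univ k)
    simp [hterm, hk]
  · rw [Finset.sum_congr rfl fun i _ => hterm i, ← Finset.sum_div, ← Finset.sum_mul,
      ← sum_posPart_sub_comm hpq, mul_div_cancel_left₀ _ hT]

end residualPlan

section coherentJam

variable {A : Type*} [DecidableEq A]

def coherentJam (s : A → ℝ) (D : A → A → ℝ) : Matrix (A × A) (A × A) ℂ :=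
  Matrix.of fun x y =>
    (if x.1 = y.2 ∧ x.2 = y.1 then (s x.1 : ℂ) * s x.2 else 0) +
      if x = y then (D x.1 x.2 : ℂ) else 0

theorem ptA_coherentJam (s : A → ℝ) (D : A → A → ℝ) :
    ptA (coherentJam s D) =
      vecMulVec (fun x : A × A => if x.1 = x.2 then (s x.1 : ℂ) else 0)
          (star fun x : A × A => if x.1 = x.2 then (s x.1 : ℂ) else 0) +
        diagonal fun x => (D x.1 x.2 : ℂ) := by
  ext ⟨a, b⟩ ⟨c, d⟩
  simp only [ptA, coherentJam, of_apply, Matrix.add_apply, vecMulVec_apply, diagonal_apply,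
    Pi.star_apply, Prod.mk.injEq]
  by_cases hab : a = b <;> by_cases hcd : c = d <;> by_cases hac : a = c <;>
    by_cases hbd : b = d <;> simp_all [eq_comm, mul_comm]

theorem posSemidef_ptA_coherentJam [Fintype A] (s : A → ℝ) {D : A → A → ℝ}
    (hD : ∀ i k, 0 ≤ D i k) : (ptA (coherentJam s D)).PosSemidef := by
  rw [ptA_coherentJam]
  refine .add ?_ (.diagonal fun x => by simpa using hD x.1 x.2)
  rw [vecMulVec_eq Unit, ← conjTranspose_replicateCol]
  exact posSemidef_self_mul_conjTranspose _

theorem trB_coherentJam [Fintype A] {s : A → ℝ} {D : A → A → ℝ}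
    (h : ∀ i, s i ^ 2 + ∑ k, D i k = 1) : trB (coherentJam s D) = 1 := by
  ext i j
  simp only [trB, coherentJam, of_apply, Prod.mk.injEq, and_true, Finset.sum_add_distrib]
  by_cases hij : i = j
  · subst hij
    simp [ite_and, ← pow_two]
    exact_mod_cast h i
  · simp [ite_and, hij]

theorem trA_diagonal_mul_coherentJam [Fintype A] (p s : A → ℝ) (D : A → A → ℝ) :
    trA (diagonal (fun x : A × A => (p x.1 : ℂ)) * coherentJam s D) =
      diagonal fun k => ((p k * s k ^ 2 + ∑ i, p i * D i k : ℝ) : ℂ) := by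
  ext k l
  simp only [trA, coherentJam, diagonal_mul, of_apply, Prod.mk.injEq, true_and, mul_add,
    Finset.sum_add_distrib]
  by_cases hkl : k = l
  · subst hkl
    simp [ite_and, ← pow_two]
  · simp [ite_and, hkl]

theorem coherentJam_apply_swap (s : A → ℝ) {D : A → A → ℝ} (hD : ∀ i, D i i = 0)
    (i k : A) :
    coherentJam s D (k, i) (i, k) = (s k : ℂ) * s i := by
  by_cases hik : i = k
  · subst hik; simp [coherentJam, hD]
  · simp [coherentJam, hik, Ne.symm hik]

end coherentJam

section optimalJam

variable {A : Type*} [Fintype A] [DecidableEq A] {p q : A → ℝ}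

noncomputable def optimalJam (p q : A → ℝ) : Matrix (A × A) (A × A) ℂ :=
  coherentJam (fun i => √(acceptRatio (p i) (q i))) (residualPlan p q)

theorem isJam_optimalJam (hp : ∀ i, 0 ≤ p i) (hq : ∀ i, 0 ≤ q i)
    (hpq : ∑ i, p i = ∑ i, q i) : IsJam (optimalJam p q) := by
  refine ⟨posSemidef_ptA_coherentJam _ residualPlan_nonneg, trB_coherentJam fun i => ?_⟩
  rw [Real.sq_sqrt (acceptRatio_nonneg (hp i) (hq i)), sum_residualPlan hp hpq, add_sub_cancel]

theorem trA_diagonal_mul_optimalJam (hp : ∀ i, 0 ≤ p i) (hq : ∀ i, 0 ≤ q i)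
    (hpq : ∑ i, p i = ∑ i, q i) :
    trA (diagonal (fun x : A × A => (p x.1 : ℂ)) * optimalJam p q) =
      diagonal fun i => (q i : ℂ) := by
  rw [optimalJam, trA_diagonal_mul_coherentJam]
  congr with k
  rw [Real.sq_sqrt (acceptRatio_nonneg (hp k) (hq k)), mul_acceptRatio (hp k) (hq k),
    sum_mul_residualPlan hp hq hpq, posPart_def]
  rcases le_total (p k) (q k) with h | h <;> simp [h]

theorem re_optimalJam_apply_swap (hp : ∀ i, 0 ≤ p i) (i k : A) :
    (optimalJam p q (k, i) (i, k)).re =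
      √(acceptRatio (p i) (q i)) * √(acceptRatio (p k) (q k)) := by
  rw [optimalJam, coherentJam_apply_swap _ (residualPlan_self hp), mul_comm]
  norm_cast

end optimalJam

namespace IsJam

variable {A : Type*} [Fintype A] [DecidableEq A] {J : Matrix (A × A) (A × A) ℂ}

theorem re_apply_self_nonneg (hJ : IsJam J) (x : A × A) : 0 ≤ (J x x).re :=
  (RCLike.nonneg_iff.mp (hJ.1.diag_nonneg (i := x))).1

theorem re_apply_self_le_one (hJ : IsJam J) (i k : A) : (J (i, k) (i, k)).re ≤ 1 := by
  have hrow : ∑ k, (J (i, k) (i, k)).re = 1 := by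
    simpa [trB, Complex.re_sum] using congrArg (fun M => (M i i).re) hJ.2
  rw [← hrow]
  exact Finset.single_le_sum (fun k _ => hJ.re_apply_self_nonneg (i, k)) (Finset.mem_univ k)

theorem mul_re_apply_self_le (hJ : IsJam J) {p q : A → ℝ} (hp : ∀ i, 0 ≤ p i)
    (hσ : trA (diagonal (fun x : A × A => (p x.1 : ℂ)) * J) = diagonal fun i => (q i : ℂ))
    (i k : A) : p i * (J (i, k) (i, k)).re ≤ q k := by
  have hcol : ∑ j, p j * (J (j, k) (j, k)).re = q k := by
    simpa [trA, diagonal_mul, Complex.re_sum] using congrArg (fun M => (M k k).re) hσ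
  rw [← hcol]
  exact Finset.single_le_sum (fun j _ => mul_nonneg (hp j) (hJ.re_apply_self_nonneg (j, k)))
    (Finset.mem_univ i)

theorem re_apply_swap_le (hJ : IsJam J) {p q : A → ℝ} (hp : ∀ i, 0 ≤ p i)
    (hσ : trA (diagonal (fun x : A × A => (p x.1 : ℂ)) * J) = diagonal fun i => (q i : ℂ))
    (i k : A) :
    (J (k, i) (i, k)).re ≤ √(acceptRatio (p i) (q i)) * √(acceptRatio (p k) (q k)) := by
  have hdiag : ∀ i, (J (i, i) (i, i)).re ≤ acceptRatio (p i) (q i) := fun i =>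
    le_acceptRatio (hp i) (hJ.re_apply_self_le_one i i) (hJ.mul_re_apply_self_le hp hσ i i)
  calc (J (k, i) (i, k)).re ≤ √(J (i, i) (i, i)).re * √(J (k, k) (k, k)).re :=
        hJ.1.re_apply_le (i, i) (k, k)
    _ ≤ _ := by gcongr <;> exact hdiag _

theorem sum_re_apply_swap_le (hJ : IsJam J) {p q : A → ℝ} (hp : ∀ i, 0 ≤ p i)
    (hσ : trA (diagonal (fun x : A × A => (p x.1 : ℂ)) * J) = diagonal fun i => (q i : ℂ)) :
    ∑ i, ∑ k, p i * (J (k, i) (i, k)).re ≤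
      ∑ i, ∑ k, p i * √(acceptRatio (p i) (q i)) * √(acceptRatio (p k) (q k)) := by
  refine Finset.sum_le_sum fun i _ => Finset.sum_le_sum fun k _ => ?_
  rw [mul_assoc]
  exact mul_le_mul_of_nonneg_left (hJ.re_apply_swap_le hp hσ i k) (hp i)

end IsJam

theorem stmt19 {A : Type*} [Fintype A] [Nonempty A] [DecidableEq A]
    (p q : A → ℝ) (hp : ∀ i, 0 ≤ p i) (hp1 : ∑ i, p i = 1)
    (hq : ∀ i, 0 ≤ q i) (hq1 : ∑ i, q i = 1)
    (r : A → ℝ) (hr : ∀ i, r i = if p i = 0 then 1 else min 1 (q i / p i)) :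
    cost (1 - ((1 : ℂ) / (Fintype.card A : ℂ)) • swap A)
        (Matrix.diagonal fun i => (p i : ℂ)) (Matrix.diagonal fun i => (q i : ℂ)) =
      (1 / (Fintype.card A : ℝ)) *
        ((Fintype.card A : ℝ) - ∑ i, ∑ j, p i * Real.sqrt (r i) * Real.sqrt (r j)) := by
  obtain rfl : r = fun i => acceptRatio (p i) (q i) := funext hr
  have hpq : ∑ i, p i = ∑ i, q i := hp1.trans hq1.symm
  have hσ1 : (diagonal fun i => (q i : ℂ)).trace = 1 := by
    rw [trace_diagonal]
    exact_mod_cast hq1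
  have hc : (1 : ℂ) / (Fintype.card A : ℂ) = ((1 / Fintype.card A : ℝ) : ℂ) := by
    push_cast; rfl
  have hd : (Fintype.card A : ℝ) ≠ 0 := Nat.cast_ne_zero.mpr Fintype.card_ne_zero
  rw [cost, diagonal_kronecker_one, hc, mul_sub, one_div_mul_cancel hd]
  have hJ₀ := isJam_optimalJam hp hq hpq
  have hσ₀ := trA_diagonal_mul_optimalJam hp hq hpq
  refine IsLeast.csInf_eq ⟨⟨optimalJam p q, hJ₀, hσ₀, ?_⟩, ?_⟩
  · rw [re_trace_mul_jordan _ p hJ₀.1.isHermitian hσ₀ hσ1]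
    simp_rw [re_optimalJam_apply_swap hp, mul_assoc]
  · rintro _ ⟨J, hJ, hσ, rfl⟩
    rw [re_trace_mul_jordan _ p hJ.1.isHermitian hσ hσ1]
    gcongr 1 - _ * ?_
    exact hJ.sum_re_apply_swap_le hp hσ
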